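/- arXiv:2506.15137 — 3 statements merged into one kernel-verified Lean document; each statement's English description precedes it below -/
import Mathlib

section
/- Let G be a finite digraph regular of in-degree h, let k ≥ 0, and set the threshold t = h − k. Then G synchronizes from an initial active set S if and only if the complement V(G) \ S contains no nonempty subset K such that every vertex x ∈ K has at least k + 1 in-neighbors inside K. -/
open Finset

-- One step of the activation process: a vertex becomes active
-- if at least `t` of its in-neighbors are active.
open Classical in
noncomputable def actStep {V : Type*} [Fintype V] (E : V → V → Prop) (t : ℕ)
    (S : Finset V) : Finset V :=
  S ∪ Finset.univ.filter (fun v => t ≤ (S.filter (fun u => E u v)).card)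

/-- `activeSets E t S i` is the set of active vertices after `i` steps. -/
noncomputable def activeSets {V : Type*} [Fintype V] (E : V → V → Prop) (t : ℕ)
    (S : Finset V) (i : ℕ) : Finset V :=
  (actStep E t)^[i] S

-- The least number of steps needed to activate all vertices (`⊤` if never).
open Classical in
noncomputable def syncTime {V : Type*} [Fintype V] (E : V → V → Prop) (t : ℕ)
    (S : Finset V) : ℕ∞ :=
  if h : ∃ i, activeSets E t S i = Finset.univ then (Nat.find h : ℕ∞) else ⊤

/-- The higher diameter `d_{st}`: the max of `syncTime` over all `s`-subsets. -/
noncomputable def higherDiam {V : Type*} [Fintype V] (E : V → V → Prop) (t s : ℕ) : ℕ∞ :=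
  ⨆ S : {S : Finset V // S.card = s}, syncTime E t S.1

/-- There is a directed cycle of length `m` in the digraph `E`, all of whose
vertices lie in `T`. -/
def cycleIn {V : Type*} (E : V → V → Prop) (T : Set V) (m : ℕ) : Prop :=
  0 < m ∧ ∃ c : ZMod m → V, Function.Injective c ∧ (∀ i, c i ∈ T) ∧
    ∀ i, E (c i) (c (i + 1))

/-- There is a directed cycle of length `m` in the digraph `E`. -/
def hasCycle {V : Type*} (E : V → V → Prop) (m : ℕ) : Prop :=
  0 < m ∧ ∃ c : ZMod m → V, Function.Injective c ∧ ∀ i, E (c i) (c (i + 1))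

/-!
A set `K` of vertices in which every vertex has fewer than `t` in-neighbours outside `K` can
never be activated from a set disjoint from it. Conversely the activation process stabilises at a
set `A` with `actStep A = A`, and if `A` is not everything, its complement is such a set `K`.
For in-degree `h` and `t = h - k`, "fewer than `h - k` in-neighbours outside `K`" means
"at least `k + 1` in-neighbours inside `K`".
-/

section Activation

open Classical

variable {V : Type*} [Fintype V] (E : V → V → Prop) (t : ℕ)

lemma activeSets_succ (S : Finset V) (i : ℕ) :
    activeSets E t S (i + 1) = actStep E t (activeSets E t S i) :=
  Function.iterate_succ_apply' _ _ _

lemma subset_actStep (S : Finset V) : S ⊆ actStep E t S := subset_union_left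

lemma mem_actStep {S : Finset V} {v : V} :
    v ∈ actStep E t S ↔ v ∈ S ∨ t ≤ (S.filter (E · v)).card := by
  simp [actStep]

lemma monotone_activeSets (S : Finset V) : Monotone (activeSets E t S) :=
  monotone_nat_of_le_succ fun i => (activeSets_succ E t S i).symm ▸ subset_actStep E t _

lemma exists_actStep_activeSets_eq (S : Finset V) :
    ∃ i, actStep E t (activeSets E t S i) = activeSets E t S i := by
  obtain ⟨n, hn⟩ :=
    WellFoundedGT.monotone_chain_condition ⟨activeSets E t S, monotone_activeSets E t S⟩
  exact ⟨n, (activeSets_succ E t S n).symm.trans (hn (n + 1) n.le_succ).symm⟩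

def IsBlocking (K : Finset V) : Prop :=
  ∀ x ∈ K, (Kᶜ.filter (E · x)).card < t

variable {E t}

lemma IsBlocking.disjoint_actStep {K A : Finset V} (hK : IsBlocking E t K)
    (hA : Disjoint A K) : Disjoint (actStep E t A) K := by
  refine disjoint_left.2 fun v hv hvK => ?_
  rcases (mem_actStep E t).1 hv with hvA | hthreshold
  · exact disjoint_left.1 hA hvA hvK
  · have hle : (A.filter (E · v)).card ≤ (Kᶜ.filter (E · v)).card :=
      card_le_card (filter_subset_filter _ (subset_compl_iff_disjoint_right.2 hA))
    exact absurd (hK v hvK) (by omega)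

lemma IsBlocking.disjoint_activeSets {K S : Finset V} (hK : IsBlocking E t K)
    (hS : Disjoint S K) (i : ℕ) : Disjoint (activeSets E t S i) K := by
  induction i with
  | zero => exact hS
  | succ i ih => rw [activeSets_succ]; exact hK.disjoint_actStep ih

lemma isBlocking_compl_of_actStep_eq {A : Finset V} (hA : actStep E t A = A) :
    IsBlocking E t Aᶜ := by
  intro x hx
  have hx' : x ∉ actStep E t A := by rwa [hA, ← mem_compl]
  rw [mem_actStep, not_or, not_le] at hx'
  simpa only [compl_compl] using hx'.2

variable (E t)

theorem exists_activeSets_eq_univ_iff (S : Finset V) :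
    (∃ i, activeSets E t S i = univ) ↔
      ¬ ∃ K : Finset V, K.Nonempty ∧ Disjoint S K ∧ IsBlocking E t K := by
  constructor
  · rintro ⟨i, hi⟩ ⟨K, ⟨x, hx⟩, hSK, hK⟩
    exact disjoint_left.1 (hK.disjoint_activeSets hSK i) (hi ▸ mem_univ x) hx
  · intro hnone
    by_contra hsync
    obtain ⟨i, hi⟩ := exists_actStep_activeSets_eq E t S
    refine hnone ⟨(activeSets E t S i)ᶜ, ?_, ?_, isBlocking_compl_of_actStep_eq hi⟩
    · exact nonempty_iff_ne_empty.2 fun h => hsync ⟨i, (compl_eq_empty_iff _).1 h⟩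
    · exact disjoint_compl_right_iff.2 (monotone_activeSets E t S i.zero_le)

lemma isBlocking_tsub_iff_of_inDegree_eq {h : ℕ} (hreg : ∀ v, (univ.filter (E · v)).card = h) (k : ℕ)
    (K : Finset V) : IsBlocking E (h - k) K ↔ ∀ x ∈ K, k + 1 ≤ (K.filter (E · x)).card := by
  refine forall₂_congr fun x _ => ?_
  have hsplit : (K.filter (E · x)).card + (Kᶜ.filter (E · x)).card = h := by
    rw [← card_union_of_disjoint (disjoint_filter_filter disjoint_compl_right), ← filter_union,
      union_compl, hreg]
  omega

end Activation

open Classical in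
theorem stmt_4_general {V : Type*} [Fintype V] (E : V → V → Prop) (h k : ℕ)
    (hreg : ∀ v : V, (Finset.univ.filter (fun u => E u v)).card = h) (S : Finset V) :
    (∃ i, activeSets E (h - k) S i = Finset.univ) ↔
    ¬ ∃ K : Finset V, K.Nonempty ∧ K ⊆ Finset.univ \ S ∧
      ∀ x ∈ K, k + 1 ≤ (K.filter (fun u => E u x)).card := by
  simp only [exists_activeSets_eq_univ_iff, isBlocking_tsub_iff_of_inDegree_eq E hreg,
    subset_sdiff, subset_univ, true_and, disjoint_comm]

open Classical in
theorem stmt_4 {V : Type*} [Fintype V] (E : V → V → Prop) (h k : ℕ) (hk : k ≤ h)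
    (hreg : ∀ v : V, (Finset.univ.filter (fun u => E u v)).card = h) (S : Finset V) :
    (∃ i, activeSets E (h - k) S i = Finset.univ) ↔
    ¬ ∃ K : Finset V, K.Nonempty ∧ K ⊆ Finset.univ \ S ∧
      ∀ x ∈ K, k + 1 ≤ (K.filter (fun u => E u x)).card :=
  stmt_4_general E h k hreg S
end

section
/- (Cycle lemma) Let s be a 0-1 sequence of length n with exactly k ones. Then some cyclic rotation of s is a 'path', i.e., encodes a lattice path from (0,0) to (n−k, k) (reading 1 as an up-step and 0 as a right-step) that stays weakly above the straight line from (0,0) to (n−k,k). Moreover, if gcd(n,k) = 1, this rotation is unique: exactly one of the n cyclic rotations of s is a path. -/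
open Finset

/-- Number of ones among the first `i` entries of the 0-1 sequence `s`. -/
def prefOnes {n : ℕ} (s : Fin n → Bool) (i : ℕ) : ℕ :=
  (Finset.univ.filter (fun j : Fin n => (j : ℕ) < i ∧ s j = true)).card

/-- The 0-1 sequence `s` (with `k` ones, `1` read as an up-step and `0` as a
right-step) encodes a lattice path from `(0,0)` to `(n-k,k)` staying weakly above
the straight line joining these points: every prefix with `a` ones and `b` zeros
satisfies `a * (n - k) ≥ b * k`. -/
def isPath {n : ℕ} (k : ℕ) (s : Fin n → Bool) : Prop :=
  ∀ i ≤ n, (i - prefOnes s i) * k ≤ prefOnes s i * (n - k)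

/-- Cyclic rotation of a sequence of length `n` by `r`. -/
def rot {n : ℕ} (r : Fin n) (s : Fin n → Bool) : Fin n → Bool := fun i => s (i + r)

/-! Extend `s` periodically and let `h j = n · o j - k · j`, where `o j` counts the ones among its
first `j` terms. A full period contributes `n · k - k · n = 0`, so `h` is `n`-periodic. The
rotation starting at `r` is a path exactly when `h` never drops below `h r`, i.e. when `r`
minimises `h`, and a minimum exists. Two minimisers `r, r'` satisfy `h r = h r'`, hence
`n ∣ k (r - r')`; if `gcd(n, k) = 1` this forces `r ≡ r' (mod n)`. -/

namespace Function.Periodic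

variable {α : Type*} {f : ℕ → α} {n : ℕ}

theorem exists_lt_forall_le [LinearOrder α] (hf : Periodic f n) (hn : 0 < n) :
    ∃ r < n, ∀ j, f r ≤ f j := by
  obtain ⟨r, hr, hmin⟩ := exists_min_image (range n) f ⟨0, mem_range.2 hn⟩
  exact ⟨r, mem_range.1 hr, fun j => hf.map_mod_nat j ▸ hmin _ (mem_range.2 (Nat.mod_lt j hn))⟩

theorem forall_le_add_iff_forall_le [Preorder α] (hf : Periodic f n) (hn : 0 < n) {r : ℕ} :
    (∀ i ≤ n, f r ≤ f (r + i)) ↔ ∀ j, f r ≤ f j := by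
  refine ⟨fun h j => ?_, fun h i _ => h _⟩
  have hrj : r ≤ j + r * n := le_add_left (Nat.le_mul_of_pos_right r hn)
  calc f r ≤ f (r + (j + r * n - r) % n) := h _ (Nat.mod_lt _ hn).le
    _ = f (r + (j + r * n - r)) := (hf.const_add r).map_mod_nat _
    _ = f j := by rw [Nat.add_sub_cancel' hrj]; simpa using (hf.nat_mul r) j

end Function.Periodic

theorem prefOnes_le {n : ℕ} (s : Fin n → Bool) (i : ℕ) : prefOnes s i ≤ i :=
  calc prefOnes s i ≤ #{j : Fin n | (j : ℕ) < i} :=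
        card_le_card (monotone_filter_right _ fun _ _ => And.left)
    _ = min n i := Fin.card_filter_val_lt
    _ ≤ i := min_le_right _ _

theorem prefOnes_self {n : ℕ} (s : Fin n → Bool) : prefOnes s n = #{j | s j = true} := by
  simp [prefOnes]

section CyclicSequence

open Fin.NatCast

variable {n : ℕ} [NeZero n]

-- `(t : Fin n)` is `t % n`: this counts ones in the periodic extension of `s`.
def cyclicPrefOnes (s : Fin n → Bool) (j : ℕ) : ℕ :=
  ∑ t ∈ range j, (s t).toNat

theorem prefOnes_eq_cyclicPrefOnes (s : Fin n → Bool) {i : ℕ} (hi : i ≤ n) :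
    prefOnes s i = cyclicPrefOnes s i :=
  calc prefOnes s i = ∑ t ∈ range n, if t < i ∧ s t = true then 1 else 0 := by
        rw [prefOnes, card_filter, ← Fin.sum_univ_eq_sum_range]
        simp only [Fin.cast_val_eq_self]
    _ = ∑ t ∈ (range n).filter (· < i), (s t).toNat := by
        rw [sum_filter]
        refine sum_congr rfl fun t _ => ?_
        cases s t <;> simp
    _ = cyclicPrefOnes s i := by
        rw [cyclicPrefOnes, ← Nat.Iio_eq_range, Iio_filter_lt, min_eq_right hi, Nat.Iio_eq_range]

theorem cyclicPrefOnes_add (s : Fin n → Bool) (a b : ℕ) :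
    cyclicPrefOnes s (a + b) = cyclicPrefOnes s a + cyclicPrefOnes (rot (a : Fin n) s) b := by
  simp only [cyclicPrefOnes, sum_range_add, rot, Nat.cast_add]
  simp only [add_comm]

def cyclicHeight (k : ℕ) (s : Fin n → Bool) (j : ℕ) : ℤ :=
  n * cyclicPrefOnes s j - k * j

theorem cyclicHeight_add (k : ℕ) (s : Fin n → Bool) (a b : ℕ) :
    cyclicHeight k s (a + b) = cyclicHeight k s a + cyclicHeight k (rot (a : Fin n) s) b := by
  simp only [cyclicHeight, cyclicPrefOnes_add]
  push_cast
  ring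

theorem cyclicHeight_periodic {k : ℕ} {s : Fin n → Bool} (hk : #{j | s j = true} = k) :
    Function.Periodic (cyclicHeight k s) n := by
  have hrot : rot (n : Fin n) s = s := by
    funext i
    simp [rot]
  have hn : cyclicHeight k s n = 0 := by
    rw [cyclicHeight, ← prefOnes_eq_cyclicPrefOnes s le_rfl, prefOnes_self, hk]
    ring
  intro j
  rw [add_comm, cyclicHeight_add, hrot, hn, zero_add]

theorem isPath_iff_forall_cyclicHeight_nonneg {k : ℕ} (hkn : k ≤ n) (s : Fin n → Bool) :
    isPath k s ↔ ∀ i ≤ n, 0 ≤ cyclicHeight k s i := by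
  refine forall_congr' fun i => imp_congr_right fun hi => ?_
  rw [cyclicHeight, ← prefOnes_eq_cyclicPrefOnes s hi]
  have hp := prefOnes_le s i
  zify [hp, hkn]
  constructor <;> intro h <;> linarith

theorem isPath_rot_iff {k : ℕ} (hkn : k ≤ n) (s : Fin n → Bool) (r : Fin n) :
    isPath k (rot r s) ↔ ∀ i ≤ n, cyclicHeight k s r ≤ cyclicHeight k s (r + i) := by
  simp only [isPath_iff_forall_cyclicHeight_nonneg hkn, cyclicHeight_add, Fin.cast_val_eq_self,
    le_add_iff_nonneg_right]

theorem modEq_of_cyclicHeight_eq {k : ℕ} (hcop : n.gcd k = 1) {s : Fin n → Bool} {a b : ℕ}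
    (h : cyclicHeight k s a = cyclicHeight k s b) : a ≡ b [MOD n] := by
  refine Nat.ModEq.cancel_left_of_coprime hcop (Int.natCast_modEq_iff.1 ?_)
  rw [Int.modEq_iff_dvd]
  refine ⟨cyclicPrefOnes s b - cyclicPrefOnes s a, ?_⟩
  rw [cyclicHeight, cyclicHeight] at h
  push_cast
  linear_combination h

end CyclicSequence

/-- Cycle lemma: every 0-1 sequence of length `n` with `k` ones has a cyclic
rotation which is a path; if `gcd(n,k) = 1` this rotation is unique. -/
theorem stmt_11 (n k : ℕ) (hn : 0 < n) (s : Fin n → Bool)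
    (hk : (Finset.univ.filter (fun j : Fin n => s j = true)).card = k) :
    (∃ r : Fin n, isPath k (rot r s)) ∧
    (Nat.gcd n k = 1 → ∃! r : Fin n, isPath k (rot r s)) := by
  have : NeZero n := ⟨hn.ne'⟩
  have hkn : k ≤ n := hk ▸ (card_filter_le _ _).trans_eq (card_fin n)
  have hper := cyclicHeight_periodic hk
  have hpath (r : Fin n) : isPath k (rot r s) ↔ ∀ j, cyclicHeight k s r ≤ cyclicHeight k s j :=
    (isPath_rot_iff hkn s r).trans (hper.forall_le_add_iff_forall_le hn)
  obtain ⟨r, hr, hmin⟩ := hper.exists_lt_forall_le hn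
  refine ⟨⟨⟨r, hr⟩, (hpath _).2 hmin⟩, fun hcop => ⟨⟨r, hr⟩, (hpath _).2 hmin, fun r' hr' => ?_⟩⟩
  have heq := le_antisymm ((hpath r').1 hr' r) (hmin r')
  exact Fin.ext ((modEq_of_cyclicHeight_eq hcop heq).eq_of_lt_of_lt r'.isLt hr)
end

section
/- For p prime and 2 ≤ k ≤ p−1, the girth (minimum directed cycle length) of the Cayley digraph Cay(C_p, {a, a^k}) equals min over w ∈ {1,…,p} of ( p·⌈wk/p⌉ − w(k−1) ). Equivalently, the girth equals the minimum of z + w over nonnegative integers z, w, not both zero, with z + wk ≡ 0 (mod p). -/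
/-!
A closed walk in `Cay(G, {a, b})` that steps by `a` exactly `z` times and by `b` exactly `w` times
telescopes to `z • a + w • b = 0`. Conversely, if `z • a + w • b = 0` with `z + w > 0` minimal, the
walk taking first `z` steps by `a` and then `w` steps by `b` closes up after `z + w` steps without
repeating a vertex, since a repetition would be a shorter relation. So the girth is the least
length `z + w` of a nontrivial relation. For `C_p` with `a = 1`, `b = k`, the least `z` for a given
`w` is `p⌈wk/p⌉ - wk`, and only `w` modulo `p` matters, so `w` may be taken in `{1, …, p}`.
-/

open Finset

theorem hasCycle_of_injOn {V : Type*} {E : V → V → Prop} {m : ℕ} (hm : 0 < m) (f : ℕ → V)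
    (hperiod : f m = f 0) (hinj : Set.InjOn f (Set.Iio m)) (hstep : ∀ n, E (f n) (f (n + 1))) :
    hasCycle E m := by
  have : NeZero m := ⟨hm.ne'⟩
  have hsucc (i : ZMod m) : f (i + 1).val = f (i.val + 1) := by
    rw [← ZMod.natCast_zmod_val i, ← Nat.cast_succ, ZMod.val_natCast, ZMod.natCast_zmod_val]
    rcases (Nat.succ_le_of_lt (ZMod.val_lt i)).lt_or_eq with h | h
    · rw [Nat.mod_eq_of_lt h]
    · rw [h, Nat.mod_self, ← hperiod]
      exact congrArg f h.symm
  exact ⟨hm, fun i => f i.val,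
    fun i j hij => ZMod.val_injective m (hinj (ZMod.val_lt i) (ZMod.val_lt j) hij),
    fun i => by simpa only [hsucc] using hstep i.val⟩

section TwoGenerators

variable {G : Type*} [AddCancelCommMonoid G] {a b : G}

theorem exists_nsmul_add_nsmul_eq_zero_of_hasCycle {m : ℕ}
    (h : hasCycle (fun x y : G => y = a + x ∨ y = b + x) m) :
    ∃ z w : ℕ, z + w = m ∧ z • a + w • b = 0 := by
  classical
  obtain ⟨hm, c, -, hc⟩ := h
  have : NeZero m := ⟨hm.ne'⟩
  let P : ZMod m → Prop := fun i => c (i + 1) = a + c i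
  refine ⟨#{i | P i}, #{i | ¬P i},
    by rw [card_filter_add_card_filter_not, card_univ, ZMod.card], ?_⟩
  have hstep (i : ZMod m) : c (i + 1) = (if P i then a else b) + c i := by
    split_ifs with hP
    · exact hP
    · exact (hc i).resolve_left hP
  have hshift : ∑ i, c (i + 1) = ∑ i, c i :=
    Fintype.sum_equiv (Equiv.addRight 1) _ _ fun _ => rfl
  simp_rw [hstep, sum_add_distrib, add_eq_right, sum_ite, sum_const] at hshift
  exact hshift

variable (a b) in
def twoPhaseWalk (z n : ℕ) : G := min n z • a + (n - z) • b

theorem twoPhaseWalk_succ (z n : ℕ) :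
    twoPhaseWalk a b z (n + 1) = a + twoPhaseWalk a b z n ∨
      twoPhaseWalk a b z (n + 1) = b + twoPhaseWalk a b z n := by
  unfold twoPhaseWalk
  rcases lt_or_ge n z with h | h
  · left
    rw [min_eq_left h, min_eq_left (by omega), Nat.sub_eq_zero_of_le h,
      Nat.sub_eq_zero_of_le (by omega), succ_nsmul', add_assoc]
  · right
    rw [min_eq_right h, min_eq_right (by omega), Nat.sub_add_comm h, succ_nsmul', add_left_comm]

theorem twoPhaseWalk_add {z i j : ℕ} (hij : i ≤ j) :
    twoPhaseWalk a b z j =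
      twoPhaseWalk a b z i + ((min j z - min i z) • a + ((j - z) - (i - z)) • b) := by
  unfold twoPhaseWalk
  conv_lhs => rw [← Nat.add_sub_of_le (min_le_min_right z hij),
    ← Nat.add_sub_of_le (Nat.sub_le_sub_right hij z)]
  rw [add_nsmul, add_nsmul]
  abel

theorem hasCycle_of_minimal {z w : ℕ} (hzw : z • a + w • b = 0) (hpos : 0 < z + w)
    (hmin : ∀ z' w' : ℕ, 0 < z' + w' → z' • a + w' • b = 0 → z + w ≤ z' + w') :
    hasCycle (fun x y : G => y = a + x ∨ y = b + x) (z + w) := by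
  refine hasCycle_of_injOn hpos (twoPhaseWalk a b z) ?_ ?_ (twoPhaseWalk_succ z)
  · simpa [twoPhaseWalk] using hzw
  · intro i hi j hj hfij
    wlog hle : i ≤ j generalizing i j
    · exact (this hj hi hfij.symm (by omega)).symm
    have hdiff := twoPhaseWalk_add (a := a) (b := b) (z := z) hle
    rw [← hfij, left_eq_add] at hdiff
    rw [Set.mem_Iio] at hi hj
    by_contra hne
    have := hmin _ _ (by omega) hdiff
    omega

variable (a b) in
theorem sInf_hasCycle_eq :
    sInf {m | hasCycle (fun x y : G => y = a + x ∨ y = b + x) m} =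
      sInf {l | ∃ z w : ℕ, ¬(z = 0 ∧ w = 0) ∧ l = z + w ∧ z • a + w • b = 0} := by
  apply csInf_eq_csInf_of_forall_exists_le
  · intro m hm
    obtain ⟨z, w, rfl, hzw⟩ := exists_nsmul_add_nsmul_eq_zero_of_hasCycle hm
    exact ⟨z + w, ⟨z, w, by have := hm.1; omega, rfl, hzw⟩, le_rfl⟩
  · intro l hl
    obtain ⟨z, w, hne, hl₀, hzw⟩ := Nat.sInf_mem ⟨l, hl⟩
    refine ⟨_, ?_, Nat.sInf_le hl⟩
    rw [hl₀]
    refine hasCycle_of_minimal hzw (by omega) fun z' w' hpos hzw' => ?_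
    exact hl₀ ▸ Nat.sInf_le ⟨z', w', by omega, rfl, hzw'⟩

end TwoGenerators

section CeilFormula

variable {p k : ℕ}

theorem mul_ceilDiv_sub_le (hp : 0 < p) (hk : 1 ≤ k) {z w : ℕ} (h : p ∣ z + w * k) :
    p * (w * k ⌈/⌉ p) - w * (k - 1) ≤ z + w := by
  obtain ⟨q, hq⟩ := h
  have hceil : p * (w * k ⌈/⌉ p) ≤ p * q :=
    Nat.mul_le_mul_left p ((ceilDiv_le_iff_le_mul hp).2 (hq ▸ Nat.le_add_left _ _))
  have : w * (k - 1) + w = w * k := by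
    rw [← Nat.mul_add_one, Nat.sub_add_cancel hk]
  omega

theorem exists_mul_ceilDiv_sub_le (hp : 0 < p) (hk : 1 ≤ k) {z w : ℕ} (hne : ¬(z = 0 ∧ w = 0))
    (h : p ∣ z + w * k) : ∃ w', 1 ≤ w' ∧ w' ≤ p ∧ p * (w' * k ⌈/⌉ p) - w' * (k - 1) ≤ z + w := by
  rcases Nat.eq_zero_or_pos w with rfl | hw
  · have hpz : p ≤ z := Nat.le_of_dvd (by omega) (by simpa using h)
    have := mul_ceilDiv_sub_le hp hk (z := 0) (w := p) (dvd_add (dvd_zero p) (dvd_mul_right p k))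
    exact ⟨p, hp, le_rfl, by omega⟩
  · have hw_eq : (w - 1) % p + 1 + p * ((w - 1) / p) = w := by
      have := Nat.mod_add_div (w - 1) p
      omega
    have : (w - 1) % p < p := Nat.mod_lt _ hp
    refine ⟨(w - 1) % p + 1, by omega, by omega, ?_⟩
    have hdvd : p ∣ z + ((w - 1) % p + 1) * k := by
      have : z + w * k = z + ((w - 1) % p + 1) * k + p * ((w - 1) / p * k) := by
        conv_lhs => rw [← hw_eq]
        ring
      rw [this] at h
      exact (Nat.dvd_add_left (dvd_mul_right _ _)).1 h
    have := mul_ceilDiv_sub_le hp hk hdvd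
    omega

theorem sInf_mul_ceilDiv_sub_eq (hp : 0 < p) (hk : 1 ≤ k) :
    sInf {v | ∃ w : ℕ, 1 ≤ w ∧ w ≤ p ∧ v = p * (w * k ⌈/⌉ p) - w * (k - 1)} =
      sInf {l | ∃ z w : ℕ, ¬(z = 0 ∧ w = 0) ∧ l = z + w ∧ p ∣ z + w * k} := by
  apply csInf_eq_csInf_of_forall_exists_le
  · rintro _ ⟨w, hw, -, rfl⟩
    have hle : w * k ≤ p * (w * k ⌈/⌉ p) := le_smul_ceilDiv hp
    have : w * (k - 1) + w = w * k := by
      rw [← Nat.mul_add_one, Nat.sub_add_cancel hk]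
    refine ⟨_, ⟨p * (w * k ⌈/⌉ p) - w * k, w, by omega, by omega, ?_⟩, le_rfl⟩
    rw [Nat.sub_add_cancel hle]
    exact dvd_mul_right _ _
  · rintro _ ⟨z, w, hne, rfl, h⟩
    obtain ⟨w', hw'1, hw'p, hle⟩ := exists_mul_ceilDiv_sub_le hp hk hne h
    exact ⟨_, ⟨w', hw'1, hw'p, rfl⟩, hle⟩

end CeilFormula

theorem stmt_14_general (p k : ℕ) (hp : p.Prime) (hk2 : 2 ≤ k) :
    sInf {m | hasCycle (fun x y : ZMod p => y = 1 + x ∨ y = (k : ZMod p) + x) m} =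
      sInf {v | ∃ w : ℕ, 1 ≤ w ∧ w ≤ p ∧
        v = p * ((w * k + p - 1) / p) - w * (k - 1)} ∧
    sInf {m | hasCycle (fun x y : ZMod p => y = 1 + x ∨ y = (k : ZMod p) + x) m} =
      sInf {l | ∃ z w : ℕ, ¬(z = 0 ∧ w = 0) ∧ l = z + w ∧
        (z : ZMod p) + (w : ZMod p) * (k : ZMod p) = 0} := by
  have hgirth := sInf_hasCycle_eq (1 : ZMod p) (k : ZMod p)
  simp only [nsmul_eq_mul, mul_one] at hgirth
  refine ⟨?_, hgirth⟩
  have hdvd : ∀ z w : ℕ, (z : ZMod p) + (w : ZMod p) * (k : ZMod p) = 0 ↔ p ∣ z + w * k := by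
    intro z w
    rw [← ZMod.natCast_eq_zero_iff]
    push_cast
    rfl
  simp only [hgirth, hdvd, ← Nat.ceilDiv_eq_add_pred_div]
  exact (sInf_mul_ceilDiv_sub_eq hp.pos (by omega)).symm

/-- The girth of `Cay(C_p, {a, a^k})` equals
`min_{w ∈ {1,…,p}} (p * ⌈w k / p⌉ - w (k - 1))`, and equivalently equals the
minimum of `z + w` over nonnegative `z, w`, not both zero, with `z + w k ≡ 0 (mod p)`. -/
theorem stmt_14 (p k : ℕ) (hp : p.Prime) (hk2 : 2 ≤ k) (hkp : k ≤ p - 1) :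
    sInf {m | hasCycle (fun x y : ZMod p => y = 1 + x ∨ y = (k : ZMod p) + x) m} =
      sInf {v | ∃ w : ℕ, 1 ≤ w ∧ w ≤ p ∧
        v = p * ((w * k + p - 1) / p) - w * (k - 1)} ∧
    sInf {m | hasCycle (fun x y : ZMod p => y = 1 + x ∨ y = (k : ZMod p) + x) m} =
      sInf {l | ∃ z w : ℕ, ¬(z = 0 ∧ w = 0) ∧ l = z + w ∧
        (z : ZMod p) + (w : ZMod p) * (k : ZMod p) = 0} :=
  stmt_14_general p k hp hk2
end
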